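/- Let (X,d) be a quasi-metric space whose forward topology τ(d) equals τ(d̄), and suppose (X,d) is UC (with τ(d) T₁ and normal). Then for every closed subset A ⊆ X and every uniformly continuous, nowhere-zero function f:(A,d)→(ℝ,|·|), the reciprocal 1/f:(A,d)→(ℝ,|·|) is uniformly continuous. -/

import Mathlib

/-!
A function that is uniformly continuous on `A` is continuous there for `τ(d)`, so `1 / f` is
continuous on `A`. By Tietze's theorem in the normal space `(X, τ(d))` it extends to a continuous
function on `X`; that extension is forward continuous, hence uniformly continuous by UC, and so is
its restriction `1 / f` to `A`.
-/

open Filter Topology Set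

structure IsQuasiMetric {X : Type*} (d : X → X → ℝ) : Prop where
  nonneg : ∀ x y, 0 ≤ d x y
  refl : ∀ x, d x x = 0
  eq_of_both_zero : ∀ x y, d x y = 0 → d y x = 0 → x = y
  triangle : ∀ x y z, d x y ≤ d x z + d z y

/-- The forward topology generated by forward balls `B⁺(x,ε) = {y | d x y < ε}`. -/
def forwardTopology {X : Type*} (d : X → X → ℝ) : TopologicalSpace X :=
  TopologicalSpace.generateFrom {S | ∃ x : X, ∃ ε : ℝ, 0 < ε ∧ S = {y | d x y < ε}}

/-- `s` forward converges to `x`: `d x (s n) → 0`. -/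
def ForwardConv {X : Type*} (d : X → X → ℝ) (s : ℕ → X) (x : X) : Prop :=
  ∀ ε > (0:ℝ), ∃ N : ℕ, ∀ n ≥ N, d x (s n) < ε

/-- `s` backward converges to `x`: `d (s n) x → 0`. -/
def BackwardConv {X : Type*} (d : X → X → ℝ) (s : ℕ → X) (x : X) : Prop :=
  ∀ ε > (0:ℝ), ∃ N : ℕ, ∀ n ≥ N, d (s n) x < ε

/-- `x` is a cluster point of `s`: some subsequence forward converges to `x`. -/
def IsClusterPointOf {X : Type*} (d : X → X → ℝ) (s : ℕ → X) (x : X) : Prop :=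
  ∃ φ : ℕ → ℕ, StrictMono φ ∧ ForwardConv d (s ∘ φ) x

def LeftKCauchy {X : Type*} (d : X → X → ℝ) (s : ℕ → X) : Prop :=
  ∀ ε > (0:ℝ), ∃ n₀ : ℕ, ∀ k n : ℕ, n₀ ≤ k → k ≤ n → d (s k) (s n) < ε

/-- `s` is forward parallel to `t`. -/
def ForwardParallel {X : Type*} (d : X → X → ℝ) (s t : ℕ → X) : Prop :=
  ∀ ε > (0:ℝ), ∃ N : ℕ, ∀ n ≥ N, d (s n) (t n) < ε

/-- Forward continuity for real-valued functions (ε-δ form). -/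
def ForwardContinuous {X : Type*} (d : X → X → ℝ) (f : X → ℝ) : Prop :=
  ∀ x₀ : X, ∀ ε > (0:ℝ), ∃ δ > (0:ℝ), ∀ y, d x₀ y < δ → |f x₀ - f y| < ε

/-- Uniform continuity for real-valued functions. -/
def UniformlyCont {X : Type*} (d : X → X → ℝ) (f : X → ℝ) : Prop :=
  ∀ ε > (0:ℝ), ∃ δ > (0:ℝ), ∀ x y, d x y < δ → |f x - f y| < ε

/-- `(X,d)` is a UC quasi-metric space. -/
def IsUC {X : Type*} (d : X → X → ℝ) : Prop :=
  ∀ f : X → ℝ, ForwardContinuous d f → UniformlyCont d f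

/-- Distance between two sets: `inf {d a b | a ∈ A, b ∈ B}`. -/
noncomputable def setDist {X : Type*} (d : X → X → ℝ) (A B : Set X) : ℝ :=
  sInf {r : ℝ | ∃ a ∈ A, ∃ b ∈ B, d a b = r}

def UniformlyContOn {X : Type*} (d : X → X → ℝ) (f : X → ℝ) (A : Set X) : Prop :=
  ∀ ε > (0:ℝ), ∃ δ > (0:ℝ), ∀ x ∈ A, ∀ y ∈ A, d x y < δ → |f x - f y| < ε

lemma isOpen_forwardBall {X : Type*} (d : X → X → ℝ) (x : X) {ε : ℝ} (hε : 0 < ε) :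
    IsOpen[forwardTopology d] {y | d x y < ε} :=
  TopologicalSpace.isOpen_generateFrom_of_mem ⟨x, ε, hε, rfl⟩

namespace IsQuasiMetric

variable {X : Type*} {d : X → X → ℝ}

lemma exists_forwardBall_subset_of_isOpen (hd : IsQuasiMetric d) {S : Set X}
    (hS : IsOpen[forwardTopology d] S) {x : X} (hx : x ∈ S) :
    ∃ ε > (0:ℝ), {y | d x y < ε} ⊆ S := by
  induction hS generalizing x with
  | basic s hs =>
    obtain ⟨z, ε, -, rfl⟩ := hs
    refine ⟨ε - d z x, sub_pos.2 hx, fun y hy => ?_⟩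
    have := hd.triangle z y x
    simp only [mem_ofPred_eq] at hy ⊢
    linarith
  | univ => exact ⟨1, one_pos, subset_univ _⟩
  | inter s t _ _ ihs iht =>
    obtain ⟨ε₁, hε₁, h₁⟩ := ihs hx.1
    obtain ⟨ε₂, hε₂, h₂⟩ := iht hx.2
    exact ⟨min ε₁ ε₂, lt_min hε₁ hε₂, fun y (hy : d x y < min ε₁ ε₂) =>
      ⟨h₁ (hy.trans_le (min_le_left _ _)), h₂ (hy.trans_le (min_le_right _ _))⟩⟩
  | sUnion S _ ih =>
    obtain ⟨s, hsS, hxs⟩ := hx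
    obtain ⟨ε, hε, h⟩ := ih s hsS hxs
    exact ⟨ε, hε, h.trans (subset_sUnion_of_mem hsS)⟩

lemma nhds_basis_forwardBall (hd : IsQuasiMetric d) (x : X) :
    (@nhds X (forwardTopology d) x).HasBasis (fun ε : ℝ => 0 < ε)
      (fun ε => {y | d x y < ε}) := by
  let _ := forwardTopology d
  refine ⟨fun S => ⟨fun hS => ?_, fun ⟨ε, hε, hεS⟩ => mem_of_superset ?_ hεS⟩⟩
  · obtain ⟨T, hTS, hT, hxT⟩ := mem_nhds_iff.1 hS
    obtain ⟨ε, hε, hεT⟩ := hd.exists_forwardBall_subset_of_isOpen hT hxT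
    exact ⟨ε, hε, hεT.trans hTS⟩
  · exact (isOpen_forwardBall d x hε).mem_nhds (by simpa [hd.refl x] using hε)

lemma forwardContinuous_of_continuous (hd : IsQuasiMetric d) {g : X → ℝ}
    (hg : Continuous[forwardTopology d, _] g) : ForwardContinuous d g := by
  let _ := forwardTopology d
  intro x ε hε
  obtain ⟨δ, hδ, hδg⟩ :=
    ((hd.nhds_basis_forwardBall x).tendsto_iff Metric.nhds_basis_ball).1 (hg.tendsto x) ε hε
  exact ⟨δ, hδ, fun y hy => by simpa [Real.dist_eq, abs_sub_comm] using hδg y hy⟩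

lemma continuousOn_of_uniformlyContOn (hd : IsQuasiMetric d) {f : X → ℝ} {A : Set X}
    (hf : UniformlyContOn d f A) : @ContinuousOn X ℝ (forwardTopology d) _ f A := by
  let _ := forwardTopology d
  intro x hx
  refine ((nhdsWithin_hasBasis (hd.nhds_basis_forwardBall x) A).tendsto_iff
    Metric.nhds_basis_ball).2 fun ε hε => ?_
  obtain ⟨δ, hδ, hδf⟩ := hf ε hε
  exact ⟨δ, hδ, fun y ⟨hy, hyA⟩ => by
    simpa [Real.dist_eq, abs_sub_comm] using hδf x hx y hyA hy⟩

theorem uniformlyContOn_of_continuousOn (hd : IsQuasiMetric d)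
    (hN : @NormalSpace X (forwardTopology d)) (hUC : IsUC d) {A : Set X}
    (hA : IsClosed[forwardTopology d] A) {u : X → ℝ}
    (hu : @ContinuousOn X ℝ (forwardTopology d) _ u A) :
    UniformlyContOn d u A := by
  let _ := forwardTopology d
  obtain ⟨g, hg⟩ := ContinuousMap.exists_restrict_eq hA ⟨A.domRestrict u, hu.domRestrict⟩
  have hgu : ∀ x ∈ A, g x = u x := fun x hx => congr($hg ⟨x, hx⟩)
  intro ε hε
  obtain ⟨δ, hδ, hδg⟩ := hUC g (hd.forwardContinuous_of_continuous g.continuous) ε hε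
  exact ⟨δ, hδ, fun x hx y hy hxy => by simpa [hgu x hx, hgu y hy] using hδg x y hxy⟩

end IsQuasiMetric

theorem reciprocal_uniformlyCont_general {X : Type*} (d : X → X → ℝ) (hd : IsQuasiMetric d)
    (hN : @NormalSpace X (forwardTopology d))
    (hUC : IsUC d)
    (A : Set X) (hAc : @IsClosed X (forwardTopology d) A)
    (f : X → ℝ)
    (hf : ∀ ε > (0:ℝ), ∃ δ > (0:ℝ), ∀ x ∈ A, ∀ y ∈ A, d x y < δ → |f x - f y| < ε)
    (hnz : ∀ x ∈ A, f x ≠ 0) :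
    ∀ ε > (0:ℝ), ∃ δ > (0:ℝ), ∀ x ∈ A, ∀ y ∈ A, d x y < δ →
      |1 / f x - 1 / f y| < ε := by
  let _ := forwardTopology d
  have hcont : ContinuousOn f A := hd.continuousOn_of_uniformlyContOn hf
  exact hd.uniformlyContOn_of_continuousOn hN hUC hAc (continuousOn_const.div hcont hnz)

/-- in a UC quasi-metric space with τ(d) = τ(d̄) (T₁ and normal), the reciprocal
of a nowhere-zero uniformly continuous function on a closed set is uniformly continuous. -/
theorem reciprocal_uniformlyCont {X : Type*} (d : X → X → ℝ) (hd : IsQuasiMetric d)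
    (htop : forwardTopology d = forwardTopology (fun x y => d y x))
    (hT1 : @T1Space X (forwardTopology d))
    (hN : @NormalSpace X (forwardTopology d))
    (hUC : IsUC d)
    (A : Set X) (hAc : @IsClosed X (forwardTopology d) A)
    (f : X → ℝ)
    (hf : ∀ ε > (0:ℝ), ∃ δ > (0:ℝ), ∀ x ∈ A, ∀ y ∈ A, d x y < δ → |f x - f y| < ε)
    (hnz : ∀ x ∈ A, f x ≠ 0) :
    ∀ ε > (0:ℝ), ∃ δ > (0:ℝ), ∀ x ∈ A, ∀ y ∈ A, d x y < δ →
      |1 / f x - 1 / f y| < ε :=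
  reciprocal_uniformlyCont_general d hd hN hUC A hAc f hf hnz
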